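/- arXiv:1604.03617 — 5 statements merged into one kernel-verified Lean document; each statement's English description precedes it below -/
import Mathlib

section
/- Let α ∈ 𝔽_q* and let C ⊆ 𝔽_q^n be a linear code. Then C is skew (α,θ)-cyclic if and only if its dual code C^⊥ is skew (α^{−1},θ)-cyclic. -/
/-- The skew constacyclic shift `φ_{α,θ}`:
`(c_0, …, c_{n-1}) ↦ (α·θ(c_{n-1}), θ(c_0), …, θ(c_{n-2}))`. -/
def skewShift (n : ℕ) [NeZero n] {F : Type*} [Field F] (θ : F ≃+* F) (α : F)
    (c : Fin n → F) : Fin n → F :=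
  fun i => (if i = 0 then α else 1) * θ (c (i - 1))

/-- The dual code of a set of words. -/
def dualSet {n : ℕ} {F : Type*} [Field F] (C : Set (Fin n → F)) : Set (Fin n → F) :=
  {v | ∀ c ∈ C, ∑ i, v i * c i = 0}

/-!
For the dot product, `φ_{β,θ}` has a `θ`-twisted adjoint `ψ_β`, namely
`φ_{β,θ} v ⬝ c = θ (v ⬝ ψ_β c)`, and `ψ_{α⁻¹}` inverts `φ_{α,θ}`. Over a finite field an injective
map sending `C` into itself permutes `C`, so if `C` is `φ_{α,θ}`-invariant it is also
`ψ_{α⁻¹}`-invariant, and the adjoint identity then makes `C^⊥` invariant under `φ_{α⁻¹,θ}`.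
The converse is the same statement applied to `C^⊥` and `α⁻¹`, since `C^⊥⊥ = C`.
-/

open Function Matrix Set

theorem Set.Finite.mapsTo_of_leftInverse {α : Type*} {s : Set α} (hs : s.Finite) {f g : α → α}
    (hgf : LeftInverse g f) (hf : MapsTo f s s) : MapsTo g s s := by
  intro x hx
  obtain ⟨y, hy, rfl⟩ := ((hs.injOn_iff_bijOn_of_mapsTo hf).mp hgf.injective.injOn).surjOn hx
  rwa [hgf y]

section SkewShift

variable {n : ℕ} [NeZero n] {F : Type*} [Field F] (θ : F ≃+* F)

/-- `(c_0, …, c_{n-1}) ↦ (θ⁻¹ c_1, …, θ⁻¹ c_{n-1}, θ⁻¹ (β c_0))`; the index `n - 1` is the one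
with `j + 1 = 0`. -/
def skewUnshift (β : F) (c : Fin n → F) : Fin n → F :=
  fun j => θ.symm ((if j + 1 = 0 then β else 1) * c (j + 1))

theorem leftInverse_skewUnshift_skewShift {α : F} (hα : α ≠ 0) :
    LeftInverse (skewUnshift θ α⁻¹) (skewShift n θ α) := by
  intro c
  funext j
  simp only [skewUnshift, skewShift, add_sub_cancel_right]
  by_cases h : j + 1 = 0 <;> simp [h, inv_mul_cancel₀ hα, ← mul_assoc]

theorem skewShift_dotProduct (β : F) (v c : Fin n → F) :
    skewShift n θ β v ⬝ᵥ c = θ (v ⬝ᵥ skewUnshift θ β c) := by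
  simp only [dotProduct, map_sum]
  refine (Fintype.sum_equiv (Equiv.addRight 1) _ _ fun j => ?_).symm
  simp only [skewShift, skewUnshift, Equiv.coe_addRight, add_sub_cancel_right, map_mul,
    RingEquiv.apply_symm_apply]
  by_cases h : j + 1 = 0
  · simp only [h, if_true]
    ring
  · simp [h]

theorem mapsTo_dualSet_skewShift_inv {α : F} (hα : α ≠ 0) {S : Set (Fin n → F)}
    (hS : S.Finite) (h : MapsTo (skewShift n θ α) S S) :
    MapsTo (skewShift n θ α⁻¹) (dualSet S) (dualSet S) := by
  intro v hv c hc
  have hc' : skewUnshift θ α⁻¹ c ∈ S :=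
    hS.mapsTo_of_leftInverse (leftInverse_skewUnshift_skewShift θ hα) h hc
  change skewShift n θ α⁻¹ v ⬝ᵥ c = 0
  rw [skewShift_dotProduct, show v ⬝ᵥ _ = 0 from hv _ hc', map_zero]

end SkewShift

section DualCode

abbrev dotProductForm (n : ℕ) (F : Type*) [Field F] : LinearMap.BilinForm F (Fin n → F) :=
  dotProductBilin F F

variable {n : ℕ} {F : Type*} [Field F]

theorem dotProductForm_isSymm : (dotProductForm n F).IsSymm :=
  LinearMap.BilinForm.isSymm_def.mpr fun v w => by
    simp only [dotProductBilin_apply_apply, dotProduct_comm]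

theorem dotProductForm_nondegenerate : (dotProductForm n F).Nondegenerate := by
  refine (LinearMap.IsRefl.nondegenerate_iff_separatingLeft (B := dotProductForm n F)
    dotProductForm_isSymm.isRefl).mpr fun v hv => ?_
  funext i
  simpa [dotProduct_single_one] using hv (Pi.single i 1)

theorem coe_orthogonal_dotProductForm (C : Submodule F (Fin n → F)) :
    ((dotProductForm n F).orthogonal C : Set (Fin n → F)) = dualSet (C : Set (Fin n → F)) := by
  ext v
  simp only [SetLike.mem_coe, LinearMap.BilinForm.mem_orthogonal_iff, dotProductBilin_apply_apply,
    dotProduct_comm _ v]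
  rfl

theorem dualSet_dualSet (C : Submodule F (Fin n → F)) :
    dualSet (dualSet (C : Set (Fin n → F))) = C := by
  rw [← coe_orthogonal_dotProductForm, ← coe_orthogonal_dotProductForm,
    LinearMap.BilinForm.orthogonal_orthogonal dotProductForm_nondegenerate
      dotProductForm_isSymm.isRefl]

end DualCode

/-- a linear code `C` is skew `(α,θ)`-cyclic iff its dual code
`C^⊥` is skew `(α⁻¹,θ)`-cyclic. -/
theorem stmt_3 {n : ℕ} [NeZero n] {F : Type*} [Field F] [Fintype F]
    (θ : F ≃+* F) (α : F) (hα : α ≠ 0)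
    (C : Submodule F (Fin n → F)) :
    (∀ c ∈ C, skewShift n θ α c ∈ C) ↔
      (∀ v ∈ dualSet (C : Set (Fin n → F)),
        skewShift n θ α⁻¹ v ∈ dualSet (C : Set (Fin n → F))) := by
  refine ⟨mapsTo_dualSet_skewShift_inv θ hα (toFinite _), fun h => ?_⟩
  have hdual := mapsTo_dualSet_skewShift_inv θ (inv_ne_zero hα) (toFinite _) h
  rwa [inv_inv, dualSet_dualSet] at hdual
end

section
/- Let n ≥ 1, α ∈ 𝔽_q*, and let C ⊆ 𝔽_q^n be a skew (α,θ)-cyclic code such that C = C^⊥. Then n is even and α² = 1 (i.e., α = ±1). -/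
/-!
Evenness is a dimension count: the dot product is nondegenerate, so `dim C + dim C^⊥ = n`, and
`C = C^⊥` gives `n = 2 dim C`.

For `α² = 1`, the shift multiplies the dot product of two words by `θ`, except that the
product of their last coordinates picks up the extra factor `α²`:
`⟪φ c, φ d⟫ = θ ⟪c, d⟫ + (α² - 1) θ (c₋₁ d₋₁)`. For a self-orthogonal shift-invariant code and
`α² ≠ 1` this forces every codeword to vanish at the last coordinate, so the last unit vector is
orthogonal to `C`; if `C = C^⊥` it then lies in `C`, which is absurd.
-/

open Matrix

lemma nondegenerate_dotProductBilin {ι F : Type*} [Fintype ι] [Field F] :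
    (dotProductBilin F F : LinearMap.BilinForm F (ι → F)).Nondegenerate :=
  LinearMap.BilinForm.Nondegenerate.ofSeparatingLeft fun _ hv => dotProduct_eq_zero _ hv

lemma coe_orthogonal_dotProductBilin {n : ℕ} {F : Type*} [Field F]
    (W : Submodule F (Fin n → F)) :
    (LinearMap.BilinForm.orthogonal (dotProductBilin F F) W : Set (Fin n → F)) =
      dualSet (W : Set (Fin n → F)) := by
  ext v
  simp only [SetLike.mem_coe, LinearMap.BilinForm.mem_orthogonal_iff,
    dotProductBilin_apply_apply, dotProduct_comm]
  rfl

lemma even_of_coe_eq_dualSet {n : ℕ} {F : Type*} [Field F] {C : Submodule F (Fin n → F)}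
    (hself : (C : Set (Fin n → F)) = dualSet (C : Set (Fin n → F))) : Even n := by
  have horth : LinearMap.BilinForm.orthogonal (dotProductBilin F F) C = C :=
    SetLike.coe_injective (by rw [coe_orthogonal_dotProductBilin, ← hself])
  have hrank := LinearMap.BilinForm.finrank_orthogonal nondegenerate_dotProductBilin C
  rw [horth, Module.finrank_fin_fun] at hrank
  have hle := Submodule.finrank_le C
  rw [Module.finrank_fin_fun] at hle
  exact ⟨Module.finrank F C, by omega⟩

lemma skewShift_dotProduct_skewShift {n : ℕ} [NeZero n] {F : Type*} [Field F]
    (θ : F ≃+* F) (α : F) (c d : Fin n → F) :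
    skewShift n θ α c ⬝ᵥ skewShift n θ α d =
      θ (c ⬝ᵥ d) + (α ^ 2 - 1) * θ (c (-1) * d (-1)) := by
  have hterm : ∀ i : Fin n, skewShift n θ α c i * skewShift n θ α d i =
      (if i - 1 = -1 then α ^ 2 else 1) * θ (c (i - 1) * d (i - 1)) := by
    intro i
    simp only [skewShift, map_mul, sub_eq_neg_self]
    split_ifs <;> ring
  have hsplit : ∀ j : Fin n, (if j = -1 then α ^ 2 else 1) * θ (c j * d j) =
      θ (c j * d j) + if j = -1 then (α ^ 2 - 1) * θ (c j * d j) else 0 := by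
    intro j
    split_ifs <;> ring
  calc skewShift n θ α c ⬝ᵥ skewShift n θ α d
      = ∑ i, (if i - 1 = -1 then α ^ 2 else 1) * θ (c (i - 1) * d (i - 1)) :=
        Finset.sum_congr rfl fun i _ => hterm i
    _ = ∑ j, (if j = -1 then α ^ 2 else 1) * θ (c j * d j) :=
        Fintype.sum_equiv (Equiv.subRight 1) _ _ fun _ => rfl
    _ = θ (c ⬝ᵥ d) + (α ^ 2 - 1) * θ (c (-1) * d (-1)) := by
        rw [Finset.sum_congr rfl fun j _ => hsplit j, Finset.sum_add_distrib,
          Finset.sum_ite_eq' Finset.univ, if_pos (Finset.mem_univ _), dotProduct, map_sum]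

lemma apply_neg_one_eq_zero_of_subset_dualSet {n : ℕ} [NeZero n] {F : Type*} [Field F]
    {θ : F ≃+* F} {α : F} (hα : α ^ 2 ≠ 1) {C : Set (Fin n → F)}
    (hC : ∀ c ∈ C, skewShift n θ α c ∈ C) (hsub : C ⊆ dualSet C) {c : Fin n → F} (hc : c ∈ C) :
    c (-1) = 0 := by
  have hshift : skewShift n θ α c ⬝ᵥ skewShift n θ α c = 0 := hsub (hC c hc) _ (hC c hc)
  rw [skewShift_dotProduct_skewShift, show c ⬝ᵥ c = 0 from hsub hc c hc, map_zero, zero_add,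
    mul_eq_zero, sub_eq_zero, map_eq_zero_iff θ θ.injective, mul_self_eq_zero] at hshift
  exact hshift.resolve_left hα

lemma sq_eq_one_of_coe_eq_dualSet {n : ℕ} [NeZero n] {F : Type*} [Field F]
    {θ : F ≃+* F} {α : F} {C : Set (Fin n → F)}
    (hC : ∀ c ∈ C, skewShift n θ α c ∈ C) (hself : C = dualSet C) : α ^ 2 = 1 := by
  by_contra hα
  have hsingle : Pi.single (-1 : Fin n) (1 : F) ∈ C := by
    rw [hself]
    intro c hc
    simpa [Pi.single_apply] using apply_neg_one_eq_zero_of_subset_dualSet hα hC hself.subset hc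
  simpa using apply_neg_one_eq_zero_of_subset_dualSet hα hC hself.subset hsingle

theorem stmt_4_general {n : ℕ} [NeZero n] {F : Type*} [Field F]
    (θ : F ≃+* F) (α : F)
    (C : Submodule F (Fin n → F))
    (hC : ∀ c ∈ C, skewShift n θ α c ∈ C)
    (hself : (C : Set (Fin n → F)) = dualSet (C : Set (Fin n → F))) :
    Even n ∧ α ^ 2 = 1 :=
  ⟨even_of_coe_eq_dualSet hself, sq_eq_one_of_coe_eq_dualSet hC hself⟩

/-- a self-dual skew `(α,θ)`-cyclic code of length `n ≥ 1`
forces `n` even and `α² = 1`. -/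
theorem stmt_4 {n : ℕ} [NeZero n] {F : Type*} [Field F] [Fintype F]
    (θ : F ≃+* F) (α : F) (hα : α ≠ 0)
    (C : Submodule F (Fin n → F))
    (hC : ∀ c ∈ C, skewShift n θ α c ∈ C)
    (hself : (C : Set (Fin n → F)) = dualSet (C : Set (Fin n → F))) :
    Even n ∧ α ^ 2 = 1 :=
  stmt_4_general θ α C hC hself
end

section
/- Let n ≥ 1, 1 ≤ k ≤ n−1, and α ∈ 𝔽_q*. Let g_0, ..., g_{n−k} ∈ 𝔽_q with g_{n−k} = 1, suppose g(x) = ∑_{i=0}^{n−k} g_i x^i is a right divisor of x^n − α in 𝔽_q[x;θ], and let C ⊆ 𝔽_q^n be the code generated by g(x). Suppose ℏ_0, ..., ℏ_k ∈ 𝔽_q satisfy, for all 0 ≤ j ≤ n: ∑_i g_i·θ^i(ℏ_{j−i}) equals 1 if j = n, equals −θ^{−k}(α) if j = 0, and equals 0 otherwise (i.e., x^n − θ^{−k}(α) = g(x)·ℏ(x) in 𝔽_q[x;θ]). Then ℏ_0 ≠ 0 and the dual code C^⊥ is the code of length n generated by h(x) = ∑_{i=0}^{k} h_i x^i, where h_i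 := θ^k(ℏ_0^{−1})·θ^i(ℏ_{k−i}); that is, C^⊥ is the 𝔽_q-span of the vectors w_0, ..., w_{n−k−1} ∈ 𝔽_q^n, where w_j has entry θ^j(h_i) in position i+j for 0 ≤ i ≤ k and 0 in all other positions. -/
/-- `genVec n θ a j` is the coefficient vector of `x^j · a(x)` in `𝔽_q[x;θ]`:
it has entry `θ^j(a_i)` in position `i + j` and `0` in positions `< j`. -/
def genVec (n : ℕ) {F : Type*} [Field F] (θ : F ≃+* F) (a : ℕ → F) (j : ℕ) :
    Fin n → F :=
  fun idx => if j ≤ idx.val then (⇑θ)^[j] (a (idx.val - j)) else 0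

section

open Function Module

variable {F : Type*} [Field F]

theorem RingEquiv.iterate_apply_ne_zero (θ : F ≃+* F) (m : ℕ) {a : F} (ha : a ≠ 0) :
    θ^[m] a ≠ 0 := by
  rw [← RingAut.coe_pow]
  exact (map_ne_zero _).mpr ha

theorem linearIndependent_of_triangular {m n : ℕ} (hm : m ≤ n) (u : Fin m → Fin n → F)
    (hzero : ∀ (j : Fin m) (p : Fin n), (p : ℕ) < j → u j p = 0)
    (hdiag : ∀ j, u j (Fin.castLE hm j) ≠ 0) :
    LinearIndependent F u := by
  let A : Matrix (Fin m) (Fin m) F := fun j p => u j (Fin.castLE hm p)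
  have hA : A.IsUpperTriangular := fun j p hpj => hzero j _ hpj
  have hdet : A.det ≠ 0 := by
    rw [Matrix.det_of_isUpperTriangular hA]
    exact Finset.prod_ne_zero_iff.mpr fun j _ => hdiag j
  exact LinearIndependent.of_comp (LinearMap.funLeft F F (Fin.castLE hm))
    (Matrix.linearIndependent_rows_of_det_ne_zero hdet)

theorem finrank_span_genVec {m n : ℕ} (hm : m ≤ n) (θ : F ≃+* F) {a : ℕ → F} (ha : a 0 ≠ 0) :
    finrank F (Submodule.span F {v | ∃ j < m, v = genVec n θ a j}) = m := by
  have hrange : {v | ∃ j < m, v = genVec n θ a j} = Set.range fun j : Fin m => genVec n θ a j := by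
    ext v
    exact ⟨fun ⟨j, hj, hv⟩ => ⟨⟨j, hj⟩, hv.symm⟩, fun ⟨j, hv⟩ => ⟨j, j.isLt, hv.symm⟩⟩
  have hli : LinearIndependent F fun j : Fin m => genVec n θ a j := by
    refine linearIndependent_of_triangular hm _ (fun j p hp => if_neg (by omega)) fun j => ?_
    simpa [genVec] using θ.iterate_apply_ne_zero j ha
  rw [hrange, finrank_span_eq_card hli, Fintype.card_fin]

def dualSubmodule {n : ℕ} (V : Submodule F (Fin n → F)) : Submodule F (Fin n → F) :=
  V.dualAnnihilator.comap (dotProductEquiv F (Fin n)).toLinearMap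

theorem coe_dualSubmodule {n : ℕ} (V : Submodule F (Fin n → F)) :
    (dualSubmodule V : Set (Fin n → F)) = dualSet (V : Set (Fin n → F)) := by
  ext v
  simp [dualSubmodule, dualSet, Submodule.mem_dualAnnihilator, dotProduct]

theorem finrank_dualSubmodule_add_finrank {n : ℕ} (V : Submodule F (Fin n → F)) :
    finrank F (dualSubmodule V) + finrank F V = n := by
  rw [dualSubmodule, Submodule.comap_equiv_eq_map_symm, LinearEquiv.finrank_map_eq, add_comm,
    Subspace.finrank_add_finrank_dualAnnihilator_eq, finrank_fin_fun]

theorem dualSet_span_eq_span {n : ℕ} {S T : Set (Fin n → F)}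
    (horth : ∀ s ∈ S, ∀ t ∈ T, ∑ i, s i * t i = 0)
    (hdim : finrank F (Submodule.span F S) + finrank F (Submodule.span F T) = n) :
    dualSet (Submodule.span F T : Set (Fin n → F)) = Submodule.span F S := by
  rw [← coe_dualSubmodule, SetLike.coe_set_eq]
  symm
  refine Submodule.eq_of_le_of_finrank_le (Submodule.span_le.mpr fun s hs => ?_)
    (by have := finrank_dualSubmodule_add_finrank (Submodule.span F T); omega)
  change dotProductEquiv F (Fin n) s ∈ (Submodule.span F T).dualAnnihilator
  refine (Submodule.mem_dualAnnihilator _).mpr fun w hw =>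
    (Submodule.span_le (p := LinearMap.ker _)).mpr (fun t ht => ?_) hw
  simpa [dotProduct] using horth s hs t ht

/-- The `j`-th coefficient of `a(x) · b(x)` in `F[x;θ]`. -/
def skewMulCoeff (θ : F ≃+* F) (a b : ℕ → F) (j : ℕ) : F :=
  ∑ i ∈ Finset.range (j + 1), a i * θ^[i] (b (j - i))

theorem skewMulCoeff_zero (θ : F ≃+* F) (a b : ℕ → F) : skewMulCoeff θ a b 0 = a 0 * b 0 := by
  simp [skewMulCoeff]

theorem skewMulCoeff_degree_add_degree (θ : F ≃+* F) {a b : ℕ → F} {r s : ℕ}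
    (ha : ∀ i, r < i → a i = 0) (hb : ∀ i, s < i → b i = 0) :
    skewMulCoeff θ a b (r + s) = a r * θ^[r] (b s) := by
  rw [skewMulCoeff, Finset.sum_eq_single r]
  · rw [Nat.add_sub_cancel_left]
  · intro i _ hir
    rcases lt_or_gt_of_ne hir with h | h
    · rw [hb _ (by omega), iterate_map_zero, mul_zero]
    · rw [ha i h, zero_mul]
  · intro h
    exact absurd (Finset.mem_range.mpr (by omega)) h

/-- `c` times the skew reciprocal `∑_{i ≤ k} θ^i(b_{k-i}) x^i` of `b(x)`, read as a
polynomial of degree `k`. -/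
def skewReciprocal (θ : F ≃+* F) (k : ℕ) (c : F) (b : ℕ → F) : ℕ → F :=
  fun i => if i ≤ k then c * θ^[i] (b (k - i)) else 0

theorem sum_genVec_skewReciprocal_mul_genVec (θ : F ≃+* F) (g b : ℕ → F) (c : F) {k n i j : ℕ}
    (hb : ∀ m, k < m → b m = 0) (hij : i ≤ k + j) (hjn : k + j < n) :
    ∑ p : Fin n, genVec n θ (skewReciprocal θ k c b) j p * genVec n θ g i p =
      θ^[j] c * θ^[i] (skewMulCoeff θ g b (k + j - i)) := by
  set T : ℕ → F := fun p => (if j ≤ p then θ^[j] (skewReciprocal θ k c b (p - j)) else 0) *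
      (if i ≤ p then θ^[i] (g (p - i)) else 0)
  have hterm : ∀ u ∈ Finset.range (k + j - i + 1),
      T (i + u) = θ^[j] c * θ^[i] (g u * θ^[u] (b (k + j - i - u))) := by
    intro u hu
    have hu : u ≤ k + j - i := Nat.lt_succ_iff.mp (Finset.mem_range.mp hu)
    simp only [T, if_pos (Nat.le_add_right i u), Nat.add_sub_cancel_left]
    split_ifs with hj
    · rw [skewReciprocal, if_pos (by omega)]
      simp only [iterate_map_mul, ← iterate_add_apply]
      rw [show j + (i + u - j) = i + u by omega, show k - (i + u - j) = k + j - i - u by omega]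
      ring
    · simp [hb (k + j - i - u) (by omega)]
  calc ∑ p : Fin n, genVec n θ (skewReciprocal θ k c b) j p * genVec n θ g i p
      = ∑ p ∈ Finset.range n, T p := Fin.sum_univ_eq_sum_range T n
    _ = ∑ p ∈ Finset.Ico i (k + j + 1), T p := by
      refine (Finset.sum_subset (fun p hp => ?_) fun p _ hp => ?_).symm
      · simp only [Finset.mem_Ico, Finset.mem_range] at hp ⊢
        omega
      · simp only [Finset.mem_Ico, not_and_or, not_le, not_lt] at hp
        rcases hp with hp | hp
        · simp [T, hp]
        · simp [T, skewReciprocal, show j ≤ p by omega, show ¬p ≤ k + j by omega]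
    _ = ∑ u ∈ Finset.range (k + j - i + 1), T (i + u) := by
      rw [Finset.sum_Ico_eq_sum_range, show k + j + 1 - i = k + j - i + 1 by omega]
    _ = θ^[j] c * θ^[i] (skewMulCoeff θ g b (k + j - i)) := by
      rw [Finset.sum_congr rfl hterm, ← Finset.mul_sum, skewMulCoeff]
      simpa only [RingAut.coe_pow] using congrArg (_ * ·) (map_sum (θ ^ i) _ _).symm

end

theorem stmt_5_general {F : Type*} [Field F]
    (θ : F ≃+* F) (n k : ℕ) (hk : 1 ≤ k) (hkn : k ≤ n - 1)
    (α : F) (hα : α ≠ 0)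
    (g ℏ : ℕ → F)
    (hgtop : ∀ i, n - k < i → g i = 0) (hgmonic : g (n - k) = 1)
    (hℏtop : ∀ i, k < i → ℏ i = 0)
    (hℏ : ∀ j ≤ n, ∑ i ∈ Finset.range (j + 1), g i * (⇑θ)^[i] (ℏ (j - i)) =
      if j = n then 1 else if j = 0 then -(⇑θ.symm)^[k] α else 0) :
    ℏ 0 ≠ 0 ∧
    dualSet ((Submodule.span F
        {v : Fin n → F | ∃ j < k, v = genVec n θ g j} : Submodule F (Fin n → F)) :
          Set (Fin n → F)) =
      ((Submodule.span F {w : Fin n → F | ∃ j < n - k,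
          w = genVec n θ
            (fun i => if i ≤ k then (⇑θ)^[k] (ℏ 0)⁻¹ * (⇑θ)^[i] (ℏ (k - i)) else 0) j} :
        Submodule F (Fin n → F)) : Set (Fin n → F)) := by
  have hconst : g 0 * ℏ 0 ≠ 0 := by
    have h0 : skewMulCoeff θ g ℏ 0 = -(⇑θ.symm)^[k] α := by
      rw [skewMulCoeff, hℏ 0 (Nat.zero_le n), if_neg (by omega), if_pos rfl]
    rw [← skewMulCoeff_zero θ, h0]
    exact neg_ne_zero.mpr (θ.symm.iterate_apply_ne_zero k hα)
  have hℏ0 : ℏ 0 ≠ 0 := right_ne_zero_of_mul hconst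
  have hℏk : ℏ k ≠ 0 := by
    have hlead := skewMulCoeff_degree_add_degree θ hgtop hℏtop
    rw [Nat.sub_add_cancel (by omega), skewMulCoeff, hℏ n le_rfl, if_pos rfl, hgmonic, one_mul]
      at hlead
    intro hzero
    rw [hzero, iterate_map_zero] at hlead
    exact one_ne_zero hlead
  show ℏ 0 ≠ 0 ∧ dualSet _ = (Submodule.span F {w | ∃ j < n - k,
    w = genVec n θ (skewReciprocal θ k ((⇑θ)^[k] (ℏ 0)⁻¹) ℏ) j} : Set (Fin n → F))
  refine ⟨hℏ0, dualSet_span_eq_span ?_ ?_⟩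
  · rintro _ ⟨j, hj, rfl⟩ _ ⟨i, hi, rfl⟩
    refine (sum_genVec_skewReciprocal_mul_genVec θ g ℏ _ hℏtop (by omega) (by omega)).trans ?_
    rw [skewMulCoeff, hℏ _ (by omega), if_neg (by omega), if_neg (by omega), iterate_map_zero,
      mul_zero]
  · rw [finrank_span_genVec (by omega) θ ?_,
      finrank_span_genVec (by omega) θ (left_ne_zero_of_mul hconst)]
    · omega
    · simpa [skewReciprocal, hℏk] using θ.iterate_apply_ne_zero k (inv_ne_zero hℏ0)

/-- if `g(x) = ∑_{i=0}^{n-k} g_i x^i` (monic) right-divides `x^n - α`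
in `𝔽_q[x;θ]`, `C` is the code generated by `g(x)`, and
`x^n - θ^{-k}(α) = g(x)·ℏ(x)`, then `ℏ_0 ≠ 0` and the dual code `C^⊥` is the
code of length `n` generated by `h(x) = ∑_{i=0}^k θ^k(ℏ_0⁻¹)·θ^i(ℏ_{k-i}) x^i`. -/
theorem stmt_5 {F : Type*} [Field F] [Fintype F]
    (θ : F ≃+* F) (n k : ℕ) (hk : 1 ≤ k) (hkn : k ≤ n - 1)
    (α : F) (hα : α ≠ 0)
    (g ℏ : ℕ → F)
    (hgtop : ∀ i, n - k < i → g i = 0) (hgmonic : g (n - k) = 1)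
    (hdvd : ∃ t : ℕ → F, (∀ i, k < i → t i = 0) ∧
      ∀ j ≤ n, ∑ i ∈ Finset.range (j + 1), t i * (⇑θ)^[i] (g (j - i)) =
        if j = n then 1 else if j = 0 then -α else 0)
    (hℏtop : ∀ i, k < i → ℏ i = 0)
    (hℏ : ∀ j ≤ n, ∑ i ∈ Finset.range (j + 1), g i * (⇑θ)^[i] (ℏ (j - i)) =
      if j = n then 1 else if j = 0 then -(⇑θ.symm)^[k] α else 0) :
    ℏ 0 ≠ 0 ∧
    dualSet ((Submodule.span F
        {v : Fin n → F | ∃ j < k, v = genVec n θ g j} : Submodule F (Fin n → F)) :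
          Set (Fin n → F)) =
      ((Submodule.span F {w : Fin n → F | ∃ j < n - k,
          w = genVec n θ
            (fun i => if i ≤ k then (⇑θ)^[k] (ℏ 0)⁻¹ * (⇑θ)^[i] (ℏ (k - i)) else 0) j} :
        Submodule F (Fin n → F)) : Set (Fin n → F)) :=
  stmt_5_general θ n k hk hkn α hα g ℏ hgtop hgmonic hℏtop hℏ
end

section
/- Let α ∈ 𝔽_q*, 1 ≤ k ≤ n, and let C ⊆ 𝔽_q^n be a linear code with dim C = n − k. Then C is skew (α,θ)-cyclic if and only if there exist a row vector P ∈ 𝔽_q^k and an invertible k×k matrix T over 𝔽_q such that, setting τ(v) = (θ(v_0), ..., θ(v_{k−1}))·T, one has τ^n(P) = α·P and C = {(c_0, ..., c_{n−1}) ∈ 𝔽_q^n : ∑_{i=0}^{n−1} c_i·τ^i(P) = 0}. -/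
/-- The θ-semilinear map `τ(v) = (θ(v_0), …, θ(v_{k-1}))·T` attached to a
matrix `T`. -/
def tauMap {k : ℕ} {F : Type*} [Field F] (θ : F ≃+* F)
    (T : Matrix (Fin k) (Fin k) F) : (Fin k → F) → (Fin k → F) :=
  fun v => Matrix.vecMul (fun i => θ (v i)) T

/-!
If `C` is invariant under the θ-semilinear bijection `φ = φ_{α,θ}`, then `φ` descends along a
linear surjection `π : 𝔽ⁿ → 𝔽ᵏ` with kernel `C` to a θ-semilinear bijection `τ` of `𝔽ᵏ`, and every
such map is `v ↦ θ(v)·T` with `T` invertible. As `φ` sends `e_i` to `e_{i+1}` and `e_{n-1}` to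
`α e_0`, the columns of `π` are `τⁱ(P)` for `P = π(e_0)`, and `τⁿ(P) = α P`. Conversely, if
`τⁿ(P) = α P`, the parity check map `H c = ∑ cᵢ τⁱ(P)` satisfies `H ∘ φ = τ ∘ H`, so its kernel
is `φ`-invariant.
-/

theorem LinearMap.exists_semilinear_comp_eq {R S M N M' N' : Type*} [Ring R] [Ring S]
    {σ : R →+* S} [AddCommGroup M] [AddCommGroup N] [AddCommGroup M'] [AddCommGroup N']
    [Module R M] [Module R N] [Module S M'] [Module S N']
    (π : M →ₗ[R] N) (hπ : Function.Surjective π) (π' : M' →ₗ[S] N') (f : M →ₛₗ[σ] M')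
    (hf : ∀ x, π x = 0 → π' (f x) = 0) :
    ∃ g : N →ₛₗ[σ] N', ∀ x, g (π x) = π' (f x) := by
  let e := π.quotKerEquivOfSurjective hπ
  refine ⟨(LinearMap.ker π).liftQ (π'.comp f) hf ∘ₛₗ e.symm.toLinearMap, fun x => ?_⟩
  have hx : e.symm (π x) = Submodule.Quotient.mk x :=
    e.symm_apply_eq.mpr (π.quotKerEquivOfSurjective_apply_mk hπ x).symm
  simp only [LinearMap.coe_comp, Function.comp_apply, LinearEquiv.coe_coe, hx]
  rfl

theorem Submodule.exists_surjective_ker_eq {K V : Type*} [DivisionRing K] [AddCommGroup V]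
    [Module K V] [FiniteDimensional K V] (C : Submodule K V) {k : ℕ}
    (hk : Module.finrank K V - Module.finrank K C = k) :
    ∃ π : V →ₗ[K] (Fin k → K), Function.Surjective π ∧ LinearMap.ker π = C := by
  have hq : Module.finrank K (V ⧸ C) = Module.finrank K (Fin k → K) := by
    rw [C.finrank_quotient, hk, Module.finrank_fin_fun]
  let e := LinearEquiv.ofFinrankEq _ _ hq
  exact ⟨e.toLinearMap ∘ₗ C.mkQ, e.surjective.comp C.mkQ_surjective, by
    rw [LinearEquiv.ker_comp, Submodule.ker_mkQ]⟩

section SkewCyclic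

variable {F : Type*} [Field F] (θ : F ≃+* F)

section tauMap

variable {k : ℕ}

def tauSemilinear (T : Matrix (Fin k) (Fin k) F) :
    (Fin k → F) →ₛₗ[(θ : F →+* F)] (Fin k → F) where
  toFun := tauMap θ T
  map_add' u v := by
    simp only [tauMap, Pi.add_apply, map_add, ← Matrix.add_vecMul]
    rfl
  map_smul' a v := by
    simp only [tauMap, Pi.smul_apply, smul_eq_mul, map_mul, RingHom.coe_coe, ← Matrix.smul_vecMul]
    rfl

theorem tauMap_of_apply_single (g : (Fin k → F) →ₛₗ[(θ : F →+* F)] (Fin k → F)) :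
    tauMap θ (Matrix.of fun i => g (Pi.single i 1)) = g := by
  funext v
  conv_rhs => rw [pi_eq_sum_univ' v]
  ext j
  simp [tauMap, Matrix.vecMul, dotProduct, map_sum, Finset.sum_apply]

theorem isUnit_of_surjective_tauMap {T : Matrix (Fin k) (Fin k) F}
    (h : Function.Surjective (tauMap θ T)) : IsUnit T := by
  rw [← Matrix.vecMul_surjective_iff_isUnit]
  intro w
  obtain ⟨v, rfl⟩ := h w
  exact ⟨fun i => θ (v i), rfl⟩

end tauMap

section skewShift

variable {n : ℕ} (α : F)

def skewShiftSemilinear [NeZero n] : (Fin n → F) →ₛₗ[(θ : F →+* F)] (Fin n → F) where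
  toFun := skewShift n θ α
  map_add' u v := funext fun i => by simp [skewShift, mul_add]
  map_smul' a v := funext fun i => by
    simp only [skewShift, Pi.smul_apply, smul_eq_mul, map_mul, RingHom.coe_coe]
    ring

theorem skewShift_surjective [NeZero n] (hα : α ≠ 0) : Function.Surjective (skewShift n θ α) := by
  intro d
  refine ⟨fun j => θ.symm (d (j + 1) / if j + 1 = 0 then α else 1), funext fun i => ?_⟩
  simp only [skewShift, sub_add_cancel, RingEquiv.apply_symm_apply]
  split_ifs <;> field_simp

theorem skewShift_apply_zero (c : Fin (n + 1) → F) :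
    skewShift (n + 1) θ α c 0 = α * θ (c (Fin.last n)) := by
  have h : (0 : Fin (n + 1)) - 1 = Fin.last n := sub_eq_iff_eq_add.mpr (Fin.last_add_one n).symm
  show (if (0 : Fin (n + 1)) = 0 then α else 1) * θ (c (0 - 1)) = _
  rw [if_pos rfl, h]

theorem skewShift_apply_succ (c : Fin (n + 1) → F) (i : Fin n) :
    skewShift (n + 1) θ α c i.succ = θ (c i.castSucc) := by
  rw [skewShift, if_neg (Fin.succ_ne_zero i), one_mul, ← Fin.coeSucc_eq_succ, add_sub_cancel_right]

theorem skewShift_single_castSucc (i : Fin n) (a : F) :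
    skewShift (n + 1) θ α (Pi.single i.castSucc a) = Pi.single i.succ (θ a) := by
  funext j
  cases j using Fin.cases <;>
    simp [skewShift_apply_zero, skewShift_apply_succ, Pi.single_apply, apply_ite θ]

theorem skewShift_single_last (a : F) :
    skewShift (n + 1) θ α (Pi.single (Fin.last n) a) = Pi.single 0 (α * θ a) := by
  funext j
  cases j using Fin.cases <;> simp [skewShift_apply_zero, skewShift_apply_succ, Fin.castSucc_ne_last]

end skewShift

section parityCheck

variable {n : ℕ} {α : F} {M : Type*} [AddCommGroup M] [Module F M]

theorem apply_single_eq_iterate_of_semiconj {π : (Fin (n + 1) → F) →ₗ[F] M} {τ : M → M}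
    (h : ∀ x, π (skewShift (n + 1) θ α x) = τ (π x)) (i : Fin (n + 1)) :
    π (Pi.single i 1) = τ^[i] (π (Pi.single 0 1)) := by
  induction i using Fin.induction with
  | zero => rfl
  | succ i ih =>
    rw [Fin.val_succ, Function.iterate_succ_apply', ← Fin.val_castSucc, ← ih, ← h,
      skewShift_single_castSucc, map_one]

theorem eq_linearCombination_of_semiconj {π : (Fin (n + 1) → F) →ₗ[F] M} {τ : M → M}
    (h : ∀ x, π (skewShift (n + 1) θ α x) = τ (π x)) :
    π = Fintype.linearCombination F (fun i : Fin (n + 1) => τ^[i] (π (Pi.single 0 1))) :=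
  LinearMap.pi_ext' fun i => LinearMap.ext_ring <| by
    simp [apply_single_eq_iterate_of_semiconj θ h i]

theorem iterate_apply_single_zero_of_semiconj {π : (Fin (n + 1) → F) →ₗ[F] M} {τ : M → M}
    (h : ∀ x, π (skewShift (n + 1) θ α x) = τ (π x)) :
    τ^[n + 1] (π (Pi.single 0 1)) = α • π (Pi.single 0 1) := by
  have hlast := apply_single_eq_iterate_of_semiconj θ h (Fin.last n)
  rw [Fin.val_last] at hlast
  rw [Function.iterate_succ_apply', ← hlast, ← h, skewShift_single_last, map_one, ← smul_eq_mul,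
    Pi.single_smul', map_smul]

theorem linearCombination_skewShift (f : M →ₛₗ[(θ : F →+* F)] M) {P : M}
    (hP : f^[n + 1] P = α • P) (c : Fin (n + 1) → F) :
    Fintype.linearCombination F (fun i : Fin (n + 1) => f^[i] P) (skewShift (n + 1) θ α c) =
      f (Fintype.linearCombination F (fun i : Fin (n + 1) => f^[i] P) c) := by
  simp only [Fintype.linearCombination_apply, map_sum, map_smulₛₗ, RingHom.coe_coe]
  rw [Fin.sum_univ_succ, Fin.sum_univ_castSucc]
  simp [skewShift_apply_zero, skewShift_apply_succ, ← Function.iterate_succ_apply' f, hP,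
    mul_smul, smul_comm α, add_comm]

end parityCheck

end SkewCyclic

theorem stmt_6_general {n k : ℕ} [NeZero n] (hkn : k ≤ n)
    {F : Type*} [Field F]
    (θ : F ≃+* F) (α : F) (hα : α ≠ 0)
    (C : Submodule F (Fin n → F)) (hdim : Module.finrank F C = n - k) :
    (∀ c ∈ C, skewShift n θ α c ∈ C) ↔
      ∃ (P : Fin k → F) (T : Matrix (Fin k) (Fin k) F), IsUnit T ∧
        (tauMap θ T)^[n] P = α • P ∧
        (C : Set (Fin n → F)) =
          {c : Fin n → F | ∑ i : Fin n, c i • (tauMap θ T)^[(i : ℕ)] P = 0} := by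
  obtain ⟨n, rfl⟩ := Nat.exists_eq_add_one_of_ne_zero (NeZero.ne n)
  constructor
  · intro hC
    obtain ⟨π, hπ, rfl⟩ := C.exists_surjective_ker_eq (k := k) (by
      rw [hdim, Module.finrank_fin_fun]; omega)
    obtain ⟨g, hg⟩ := π.exists_semilinear_comp_eq hπ π (skewShiftSemilinear θ α) hC
    have hsemiconj : ∀ x, π (skewShift (n + 1) θ α x) = g (π x) := fun x => (hg x).symm
    have hg_surj : Function.Surjective g := fun w => by
      obtain ⟨x, rfl⟩ := hπ w
      obtain ⟨y, rfl⟩ := skewShift_surjective θ α hα x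
      exact ⟨π y, (hsemiconj y).symm⟩
    obtain ⟨T, hT⟩ : ∃ T, tauMap θ T = g := ⟨_, tauMap_of_apply_single θ g⟩
    refine ⟨π (Pi.single 0 1), T, isUnit_of_surjective_tauMap θ (hT ▸ hg_surj), ?_, ?_⟩ <;>
      rw [hT]
    · exact iterate_apply_single_zero_of_semiconj θ hsemiconj
    · ext c
      show π c = 0 ↔ _
      rw [LinearMap.congr_fun (eq_linearCombination_of_semiconj θ hsemiconj) c]
      rfl
  · rintro ⟨P, T, -, hP, hC⟩ c hc
    have hmem : ∀ x, x ∈ C ↔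
        Fintype.linearCombination F (fun i : Fin (n + 1) => (tauSemilinear θ T)^[i] P) x = 0 :=
      fun x => by rw [← SetLike.mem_coe, hC]; rfl
    rw [hmem] at hc ⊢
    rw [linearCombination_skewShift θ (tauSemilinear θ T) hP, hc, map_zero]

/-- a linear `[n, n-k]`-code `C` is skew `(α,θ)`-cyclic iff it has
a parity check matrix of the form `[Pᵗ, (Pτ)ᵗ, …, (Pτ^{n-1})ᵗ]` with
`τ = Θ ∘ T`, `T ∈ GL(k,q)` and `Pτⁿ = α·P`. -/
theorem stmt_6 {n k : ℕ} [NeZero n] (hk : 1 ≤ k) (hkn : k ≤ n)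
    {F : Type*} [Field F] [Fintype F]
    (θ : F ≃+* F) (α : F) (hα : α ≠ 0)
    (C : Submodule F (Fin n → F)) (hdim : Module.finrank F C = n - k) :
    (∀ c ∈ C, skewShift n θ α c ∈ C) ↔
      ∃ (P : Fin k → F) (T : Matrix (Fin k) (Fin k) F), IsUnit T ∧
        (tauMap θ T)^[n] P = α • P ∧
        (C : Set (Fin n → F)) =
          {c : Fin n → F | ∑ i : Fin n, c i • (tauMap θ T)^[(i : ℕ)] P = 0} :=
  stmt_6_general hkn θ α hα C hdim
end

section
/- Let p be a prime, t ≥ 2, 1 ≤ s ≤ t−1, q = p^t, and let θ be the automorphism of 𝔽_q given by θ(a) = a^{p^s}. Let α ∈ 𝔽_q*, let n > k ≥ 1, and let g_0, ..., g_k ∈ 𝔽_q with g_k = 1 be such that g(x) = ∑_{i=0}^{k} g_i x^i is a right divisor of x^n − α in 𝔽_q[x;θ]. Then the associated [p^s]-polynomial g^{[]_s}(X) = ∑_{i=0}^{k} g_i·X^{[i]_s} divides X^{[n]_s} − α in the commutative polynomial ring 𝔽_q[X]. -/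
/-- `br p s i = [i]_s = 1 + p^s + p^{2s} + ⋯ + p^{(i-1)s} = ((p^s)^i - 1)/(p^s - 1)`. -/
def br (p s i : ℕ) : ℕ := ∑ j ∈ Finset.range i, (p ^ s) ^ j

/-!
Write `G = g^{[]_s}` and `h = ∑ tᵢ xⁱ` for the skew cofactor, `h g = xⁿ - α`. In characteristic
`p` the map `P ↦ P ^ (p^s)^i` is additive and sends `X ^ [j]_s` to `X ^ ((p^s)^i [j]_s)`, so
`tᵢ G^{(p^s)^i} X^{[i]_s}` is the `[p^s]`-polynomial of `tᵢ xⁱ g`, using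
`[i + j]_s = [i]_s + (p^s)^i [j]_s`. Summing over `i` linearizes `h g = xⁿ - α` into
`∑ tᵢ G^{(p^s)^i} X^{[i]_s} = X^{[n]_s} - α`, and every term on the left is a multiple of `G`.
-/

open Finset Polynomial

lemma br_add (p s i j : ℕ) : br p s (i + j) = br p s i + (p ^ s) ^ i * br p s j := by
  simp only [br, sum_range_add, mul_sum, pow_add]

lemma sum_range_sum_range_eq_sum_range_diag {M : Type*} [AddCommMonoid M] {N K : ℕ}
    (f : ℕ → ℕ → M) (hf : ∀ i j, N < i ∨ K < j → f i j = 0) :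
    ∑ i ∈ range (N + 1), ∑ j ∈ range (K + 1), f i j =
      ∑ m ∈ range (N + K + 1), ∑ i ∈ range (m + 1), f i (m - i) := by
  calc ∑ i ∈ range (N + 1), ∑ j ∈ range (K + 1), f i j
      = ∑ i ∈ range (N + 1), ∑ j ∈ range (N + K + 1 - i), f i j := by
        refine sum_congr rfl fun i hi => sum_subset ?_ fun j _ hj => hf i j ?_
        · exact range_subset_range.2 (by simp only [mem_range] at hi; omega)
        · simp only [mem_range] at hj; omega
    _ = ∑ i ∈ range (N + K + 1), ∑ j ∈ range (N + K + 1 - i), f i j := by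
        refine sum_subset (range_subset_range.2 (by omega)) fun i _ hi =>
          sum_eq_zero fun j _ => hf i j ?_
        simp only [mem_range] at hi; omega
    _ = _ := (sum_range_diag_flip _ _).symm

section Linearized

variable {R : Type*} [CommRing R] (p s : ℕ)

/-- The `[p^s]`-polynomial `g^{[]_s}` of the coefficients `g 0, …, g K`. -/
noncomputable def linearized (g : ℕ → R) (K : ℕ) : R[X] :=
  ∑ i ∈ range (K + 1), C (g i) * X ^ br p s i

variable {p s}

lemma linearized_congr {g g' : ℕ → R} {K : ℕ} (h : ∀ m ≤ K, g m = g' m) :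
    linearized p s g K = linearized p s g' K :=
  sum_congr rfl fun m hm => by rw [h m (Nat.lt_succ_iff.1 (mem_range.1 hm))]

lemma linearized_ite_eq_X_pow_br_sub_C {n : ℕ} (hn : n ≠ 0) (α : R) :
    linearized p s (fun m => if m = n then 1 else if m = 0 then -α else 0) n =
      X ^ br p s n - C α := by
  obtain ⟨m, rfl⟩ := Nat.exists_eq_succ_of_ne_zero hn
  simp [linearized, sum_range_succ _ (m + 1), sum_range_succ', br, sub_eq_neg_add]

lemma linearized_pow_expChar_pow [ExpChar R p] (g : ℕ → R) (K i : ℕ) :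
    linearized p s g K ^ (p ^ s) ^ i =
      ∑ j ∈ range (K + 1), C (g j ^ (p ^ s) ^ i) * X ^ (br p s j * (p ^ s) ^ i) := by
  simp only [linearized, ← pow_mul, sum_pow_char_pow, mul_pow, ← C_pow]

lemma sum_C_mul_linearized_pow_mul_X_pow_br [ExpChar R p] (t g : ℕ → R) (N K : ℕ)
    (ht : ∀ i, N < i → t i = 0) (hg : ∀ j, K < j → g j = 0) :
    ∑ i ∈ range (N + 1), C (t i) * linearized p s g K ^ (p ^ s) ^ i * X ^ br p s i =
      linearized p s (fun m => ∑ i ∈ range (m + 1), t i * g (m - i) ^ (p ^ s) ^ i) (N + K) := by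
  have hterm : ∀ i j, C (t i) * (C (g j ^ (p ^ s) ^ i) * X ^ (br p s j * (p ^ s) ^ i)) *
      X ^ br p s i = C (t i * g j ^ (p ^ s) ^ i) * X ^ br p s (i + j) := by
    intro i j
    rw [br_add, C_mul]
    ring
  simp_rw [linearized_pow_expChar_pow, mul_sum, sum_mul, hterm]
  rw [sum_range_sum_range_eq_sum_range_diag]
  · refine sum_congr rfl fun m _ => ?_
    rw [map_sum, sum_mul]
    refine sum_congr rfl fun i hi => ?_
    rw [Nat.add_sub_cancel' (Nat.lt_succ_iff.1 (mem_range.1 hi))]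
  · rintro i j (hi | hj)
    · simp [ht i hi]
    · simp [hg j hj, (expChar_pos R p).ne']

end Linearized

theorem stmt_9_general {p t s : ℕ} (hp : p.Prime)
    {F : Type*} [Field F] [Fintype F] (hF : Fintype.card F = p ^ t)
    (θ : F ≃+* F) (hθ : ∀ a : F, θ a = a ^ p ^ s)
    (α : F) (n k : ℕ) (hkn : k < n)
    (g : ℕ → F) (hgtop : ∀ i, k < i → g i = 0)
    (hdvd : ∃ t' : ℕ → F, (∀ i, n - k < i → t' i = 0) ∧
      ∀ j ≤ n, ∑ i ∈ Finset.range (j + 1), t' i * (⇑θ)^[i] (g (j - i)) =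
        if j = n then 1 else if j = 0 then -α else 0) :
    (∑ i ∈ Finset.range (k + 1), Polynomial.C (g i) * Polynomial.X ^ br p s i) ∣
      (Polynomial.X ^ br p s n - Polynomial.C α : Polynomial F) := by
  obtain ⟨t', ht', hconv⟩ := hdvd
  have := Fact.mk hp
  have := charP_of_card_eq_prime_pow hF
  have hθ_iterate : ∀ i a, (⇑θ)^[i] a = a ^ (p ^ s) ^ i := by
    simp [show ⇑θ = (· ^ p ^ s) from funext hθ, pow_iterate]
  have hskew := sum_C_mul_linearized_pow_mul_X_pow_br (p := p) (s := s) t' g (n - k) k ht' hgtop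
  have hrhs : linearized p s (fun m => ∑ i ∈ range (m + 1), t' i * g (m - i) ^ (p ^ s) ^ i) n =
      X ^ br p s n - C α := by
    rw [← linearized_ite_eq_X_pow_br_sub_C (by omega)]
    exact linearized_congr fun m hm => by simp only [← hconv m hm, hθ_iterate]
  rw [Nat.sub_add_cancel hkn.le, hrhs] at hskew
  rw [← hskew]
  exact dvd_sum fun i _ =>
    ((dvd_pow_self _ (pow_ne_zero _ (pow_ne_zero _ hp.ne_zero))).mul_left _).mul_right _

/-- Leroy: if `g(x) = ∑_{i=0}^k g_i x^i` (monic) is a right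
divisor of `x^n - α` in `𝔽_q[x;θ]` with `θ(a) = a^{p^s}`, then the associated
`[p^s]`-polynomial `g^{[]ₛ}(X) = ∑ g_i X^{[i]_s}` divides `X^{[n]_s} - α`
in the commutative polynomial ring `𝔽_q[X]`. -/
theorem stmt_9 {p t s : ℕ} (hp : p.Prime) (ht : 2 ≤ t) (hs1 : 1 ≤ s)
    (hs2 : s ≤ t - 1)
    {F : Type*} [Field F] [Fintype F] (hF : Fintype.card F = p ^ t)
    (θ : F ≃+* F) (hθ : ∀ a : F, θ a = a ^ p ^ s)
    (α : F) (hα : α ≠ 0) (n k : ℕ) (hk : 1 ≤ k) (hkn : k < n)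
    (g : ℕ → F) (hgmonic : g k = 1) (hgtop : ∀ i, k < i → g i = 0)
    (hdvd : ∃ t' : ℕ → F, (∀ i, n - k < i → t' i = 0) ∧
      ∀ j ≤ n, ∑ i ∈ Finset.range (j + 1), t' i * (⇑θ)^[i] (g (j - i)) =
        if j = n then 1 else if j = 0 then -α else 0) :
    (∑ i ∈ Finset.range (k + 1), Polynomial.C (g i) * Polynomial.X ^ br p s i) ∣
      (Polynomial.X ^ br p s n - Polynomial.C α : Polynomial F) :=
  stmt_9_general hp hF θ hθ α n k hkn g hgtop hdvd
end
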